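/- arXiv:1604.06210 — 2 statements merged into one kernel-verified Lean document; each statement's English description precedes it below -/
import Mathlib

section
/- Let v : ℕ → ℝ be a valuation on quantities of a single item-type with v(0) = 0. If v has decreasing marginal returns (i.e., v(j+2) - v(j+1) ≤ v(j+1) - v(j) for all j), then v satisfies the single-type strong-no-complementaries condition: for all natural numbers k_x, k_y and every k_x' ≤ k_x, there exists k_y' ≤ k_y such that v(k_x) + v(k_y) ≤ v(k_x - k_x' + k_y') + v(k_y - k_y' + k_x'). -/
lemma dmr_shift (v : ℕ → ℝ)
    (hdmr : ∀ j : ℕ, v (j + 2) - v (j + 1) ≤ v (j + 1) - v j) :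
    ∀ n a t : ℕ, v (a + t + n) - v (a + t) ≤ v (a + n) - v a := by
  have hδ : Antitone (fun j => v (j + 1) - v j) :=
    antitone_nat_of_succ_le (fun j => hdmr j)
  intro n
  induction n with
  | zero => intro a t; simp
  | succ n ih =>
    intro a t
    have h1 : v (a + t + n + 1) - v (a + t + n) ≤ v (a + n + 1) - v (a + n) :=
      hδ (by omega)
    have h2 := ih a t
    have e1 : a + t + (n + 1) = a + t + n + 1 := by omega
    have e2 : a + (n + 1) = a + n + 1 := by omega
    rw [e1, e2]; linarith

/-- DMR implies the single-type strong-no-complementaries condition. -/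
theorem dmr_implies_snc (v : ℕ → ℝ) (h0 : v 0 = 0)
    (hdmr : ∀ j : ℕ, v (j + 2) - v (j + 1) ≤ v (j + 1) - v j) :
    ∀ kx ky kx' : ℕ, kx' ≤ kx → ∃ ky' : ℕ, ky' ≤ ky ∧
      v kx + v ky ≤ v (kx - kx' + ky') + v (ky - ky' + kx') := by
  intro kx ky kx' hle
  by_cases h : kx' ≤ ky
  · exact ⟨kx', h, by
      have e1 : kx - kx' + kx' = kx := by omega
      have e2 : ky - kx' + kx' = ky := by omega
      rw [e1, e2]⟩
  · refine ⟨ky, le_rfl, ?_⟩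
    push_neg at h
    have key := dmr_shift v hdmr (kx - kx') ky (kx' - ky)
    have e1 : ky + (kx' - ky) = kx' := by omega
    have e2 : kx' + (kx - kx') = kx := by omega
    have e3 : ky + (kx - kx') = kx - kx' + ky := by omega
    have e4 : ky - ky + kx' = kx' := by omega
    rw [e1, e2, e3] at key
    rw [e4]
    linarith
end

section
/- Let g ≥ 2 items have exogenous prices, one unit-demand buyer, and one additive seller. Any randomized mechanism r mapping (reported buyer values, reported seller values) to a probability distribution over traded items (including a null item) that is dominant-strategy incentive compatible, ex-post individually rational, and achieves competitive ratio α relative to the optimal gain-from-trade, must satisfy α ≤ 1/g. Formally: if for all valuation profiles the expected gain-from-trade of r is at least α times max over items x with b_x ≥ p_x ≥ s_x of (b_x - s_x) (including 0 for the null item), and r is truthful and IR, then α ≤ 1/g. -/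
set_option maxHeartbeats 2000000

/-- Exogenous-price impossibility: with `g` item-types at fixed prices, one
unit-demand buyer and one additive seller, any truthful, ex-post IR,
strongly-budget-balanced randomized mechanism has competitive ratio at most
`1/g`. -/
theorem exogenous_price_impossibility (g : ℕ) (hg : 2 ≤ g)
    (p : ℕ → ℝ) (hp : ∀ x ∈ Finset.Icc 1 g, 1 ≤ p x)
    (r : (ℕ → ℝ) → (ℕ → ℝ) → ℕ → ℝ)
    (hnn : ∀ b s x, 0 ≤ r b s x)
    (hsum : ∀ b s, ∑ x ∈ Finset.Icc 1 g, r b s x ≤ 1)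
    (hIR : ∀ b s : ℕ → ℝ, ∀ x ∈ Finset.Icc 1 g,
      0 < r b s x → p x ≤ b x ∧ s x ≤ p x)
    (hDSICbuyer : ∀ b s b' : ℕ → ℝ,
      ∑ x ∈ Finset.Icc 1 g, r b' s x * (b x - p x) ≤
      ∑ x ∈ Finset.Icc 1 g, r b s x * (b x - p x))
    (hDSICseller : ∀ b s s' : ℕ → ℝ,
      ∑ x ∈ Finset.Icc 1 g, r b s' x * (p x - s x) ≤
      ∑ x ∈ Finset.Icc 1 g, r b s x * (p x - s x))
    (α : ℝ) (hα : 0 ≤ α)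
    (hratio : ∀ b s : ℕ → ℝ, ∀ x ∈ Finset.Icc 1 g,
      p x ≤ b x → s x ≤ p x →
      α * (b x - s x) ≤ ∑ y ∈ Finset.Icc 1 g, r b s y * (b y - s y)) :
    α ≤ 1 / g := by
  by_contra hcon
  rw [not_le] at hcon
  set X := Finset.Icc 1 g with hX
  have hg1 : 1 ≤ g := le_trans (by norm_num) hg
  have hgR : (2:ℝ) ≤ (g:ℝ) := by exact_mod_cast hg
  have hgR0 : (0:ℝ) < (g:ℝ) := by linarith
  set d : ℝ := α - 1/(g:ℝ) with hdd
  have hd0 : 0 < d := by rw [hdd]; linarith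
  have hbase1 : (1:ℝ) ≤ 2*(g:ℝ)+2 := by linarith
  set M : ℝ := (2*(g:ℝ)+2)^g with hM
  have hM1 : (1:ℝ) ≤ M := one_le_pow₀ hbase1
  set N : ℝ := max 1 ((M+1)/d) with hNdef
  have hN1 : (1:ℝ) ≤ N := le_max_left _ _
  have hN0 : (0:ℝ) < N := lt_of_lt_of_le one_pos hN1
  have hMd : M / N < d := by
    have h1 : (M+1)/d ≤ N := le_max_right _ _
    have h2 : M + 1 ≤ N * d := by
      rw [div_le_iff₀ hd0] at h1; linarith
    rw [div_lt_iff₀ hN0]; nlinarith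
  have hdivN : ∀ a b : ℝ, a ≤ b → a / N ≤ b / N := by
    intro a b h; gcongr
  -- the report vectors
  set β : ℕ → ℝ := fun x => N ^ (g + 1 - x) with hβ
  have hβpos : ∀ x, 0 < β x := fun x => pow_pos hN0 _
  set bstar : ℕ → ℝ := fun y => p y + β y with hbstar
  set S : ℕ → ℕ → ℝ := fun x0 y => if y = x0 then p y - N else p y + 1 with hS
  set B : ℕ → ℕ → ℝ := fun j y => if y = j then p y + 1 else p y - 1 with hB
  set t : ℕ → ℕ → ℝ := fun j y => if y < j then p y + 1 else
      if y = j then p y - 1 else p y - N with ht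
  -- pointwise values
  have hSxx : ∀ x, S x x = p x - N := by intro x; simp [hS]
  have hSxy : ∀ x y, y ≠ x → S x y = p y + 1 := by intro x y h; simp [hS, h]
  have hBjj : ∀ j, B j j = p j + 1 := by intro j; simp [hB]
  have hBjy : ∀ j y, y ≠ j → B j y = p y - 1 := by intro j y h; simp [hB, h]
  have htlt : ∀ j y, y < j → t j y = p y + 1 := by intro j y h; simp [ht, h]
  have hteq : ∀ j, t j j = p j - 1 := by intro j; simp [ht]
  have htgt : ∀ j y, j < y → t j y = p y - N := by
    intro j y h; simp [ht, Nat.lt_asymm h, (Nat.ne_of_gt h : y ≠ j)]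
  have hbstarβ : ∀ y, bstar y - p y = β y := by intro y; simp [hbstar]
  -- IR zeroing
  have hr0b : ∀ b s : ℕ → ℝ, ∀ x ∈ X, b x < p x → r b s x = 0 := by
    intro b s x hx hb
    rcases eq_or_lt_of_le (hnn b s x) with h | h
    · exact h.symm
    · exact absurd (hIR b s x hx h).1 (not_le.mpr hb)
  have hr0s : ∀ b s : ℕ → ℝ, ∀ x ∈ X, p x < s x → r b s x = 0 := by
    intro b s x hx hs
    rcases eq_or_lt_of_le (hnn b s x) with h | h
    · exact h.symm
    · exact absurd (hIR b s x hx h).2 (not_le.mpr hs)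
  -- sums against hide reports collapse to a single term
  have hsumS : ∀ (b f : ℕ → ℝ), ∀ x0 ∈ X,
      ∑ y ∈ X, r b (S x0) y * f y = r b (S x0) x0 * f x0 := by
    intro b f x0 hx0
    refine Finset.sum_eq_single_of_mem x0 hx0 (fun y hy hne => ?_)
    have h0 : r b (S x0) y = 0 := by
      refine hr0s b (S x0) y hy ?_
      rw [hSxy x0 y hne]; linarith
    rw [h0, zero_mul]
  have hsumB : ∀ (j : ℕ), j ∈ X → ∀ (s f : ℕ → ℝ),
      ∑ y ∈ X, r (B j) s y * f y = r (B j) s j * f j := by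
    intro j hj s f
    refine Finset.sum_eq_single_of_mem j hj (fun y hy hne => ?_)
    have h0 : r (B j) s y = 0 := by
      refine hr0b (B j) s y hy ?_
      rw [hBjy j y hne]; linarith
    rw [h0, zero_mul]
  -- basic mass bounds
  have hrle1 : ∀ b s : ℕ → ℝ, ∀ y ∈ X, r b s y ≤ 1 := by
    intro b s y hy
    calc r b s y ≤ ∑ z ∈ X, r b s z :=
          Finset.single_le_sum (fun z _ => hnn b s z) hy
    _ ≤ 1 := hsum b s
  have herase : ∀ (b s : ℕ → ℝ) (x : ℕ), ∑ y ∈ X.erase x, r b s y ≤ 1 := by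
    intro b s x
    refine le_trans (Finset.sum_le_sum_of_subset_of_nonneg
      (Finset.erase_subset x X) (fun y _ _ => hnn b s y)) (hsum b s)
  have herase0 : ∀ (b s : ℕ → ℝ) (x : ℕ), 0 ≤ ∑ y ∈ X.erase x, r b s y :=
    fun b s x => Finset.sum_nonneg (fun y _ => hnn b s y)
  -- q x ≥ α
  have hq_ge : ∀ x ∈ X, α ≤ r bstar (S x) x := by
    intro x hx
    have hxle : p x ≤ bstar x := by
      simp only [hbstar]; linarith [hβpos x]
    have hsx : S x x ≤ p x := by rw [hSxx]; linarith
    have h := hratio bstar (S x) x hx hxle hsx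
    rw [hsumS bstar (fun y => bstar y - S x y) x hx] at h
    have hc : 0 < bstar x - S x x := by
      rw [hSxx]; simp only [hbstar]; linarith [hβpos x]
    exact le_of_mul_le_mul_right h hc
  -- global cap
  have hcap : ∀ x ∈ X, ∀ s : ℕ → ℝ, r bstar s x ≤ r bstar (S x) x + 1/N := by
    intro x hx s
    have h := hDSICseller bstar (S x) s
    have hR : ∑ y ∈ X, r bstar (S x) y * (p y - S x y) = r bstar (S x) x * N := by
      rw [hsumS bstar (fun y => p y - S x y) x hx, hSxx]; ring
    have hL : ∑ y ∈ X, r bstar s y * (p y - S x y)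
        = r bstar s x * N + ∑ y ∈ X.erase x, r bstar s y * (p y - S x y) := by
      rw [← Finset.add_sum_erase X _ hx, hSxx]
      congr 1
      ring
    have hE : ∑ y ∈ X.erase x, r bstar s y * (p y - S x y)
        = - ∑ y ∈ X.erase x, r bstar s y := by
      rw [← Finset.sum_neg_distrib]
      refine Finset.sum_congr rfl (fun y hy => ?_)
      rw [hSxy x y (Finset.mem_erase.mp hy).1]; ring
    rw [hR, hL, hE] at h
    have h1 : r bstar s x * N ≤ r bstar (S x) x * N + 1 := by
      have := herase bstar s x; linarith
    refine le_of_mul_le_mul_right ?_ hN0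
    calc r bstar s x * N ≤ r bstar (S x) x * N + 1 := h1
    _ = (r bstar (S x) x + 1/N) * N := by field_simp
  -- key utility lower bound via buyer-hide report
  have hL3 : ∀ j ∈ X, ∀ s : ℕ → ℝ, s j < p j →
      r bstar (S j) j * β j ≤ ∑ y ∈ X, r bstar s y * β y := by
    intro j hj s hsj
    -- (c) : q j ≤ q'
    have hc := hDSICbuyer (B j) (S j) bstar
    rw [hsumB j hj (S j) (fun y => B j y - p y)] at hc
    have hcL : ∑ y ∈ X, r bstar (S j) y * (B j y - p y)
        = r bstar (S j) j * (B j j - p j) :=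
      hsumS bstar (fun y => B j y - p y) j hj
    rw [hcL, hBjj] at hc
    -- hc : q j * 1 ≤ q' * 1  (after simplifying p j + 1 - p j = 1)
    have hq_le_q' : r bstar (S j) j ≤ r (B j) (S j) j := by
      have h1 : (p j + 1 - p j) = 1 := by ring
      rw [h1] at hc; linarith
    -- (b) : q' ≤ ρ
    have hb := hDSICseller (B j) s (S j)
    rw [hsumB j hj (S j) (fun y => p y - s y),
        hsumB j hj s (fun y => p y - s y)] at hb
    have hq'_le_ρ : r (B j) (S j) j ≤ r (B j) s j := by
      have hcpos : 0 < p j - s j := by linarith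
      exact le_of_mul_le_mul_right hb hcpos
    -- (a) : ρ * β j ≤ u
    have ha := hDSICbuyer bstar s (B j)
    rw [hsumB j hj s (fun y => bstar y - p y), hbstarβ] at ha
    have ha' : ∑ y ∈ X, r bstar s y * (bstar y - p y)
        = ∑ y ∈ X, r bstar s y * β y :=
      Finset.sum_congr rfl (fun y _ => by rw [hbstarβ])
    rw [ha'] at ha
    calc r bstar (S j) j * β j ≤ r (B j) s j * β j := by
          apply mul_le_mul_of_nonneg_right _ (hβpos j).le
          exact le_trans hq_le_q' hq'_le_ρ
    _ ≤ ∑ y ∈ X, r bstar s y * β y := ha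
  -- pin lemma at profile (bstar, t j)
  have hpin : ∀ j, 1 ≤ j → j ≤ g →
      r bstar (S j) j - (g:ℝ)/N ≤ r bstar (t j) j := by
    intro j hj1 hjg
    have hjX : j ∈ X := by rw [hX]; exact Finset.mem_Icc.mpr ⟨hj1, hjg⟩
    have htjj : t j j < p j := by rw [hteq]; linarith
    have h3 := hL3 j hjX (t j) htjj
    have hsplit : ∑ y ∈ X, r bstar (t j) y * β y
        = r bstar (t j) j * β j + ∑ y ∈ X.erase j, r bstar (t j) y * β y :=
      (Finset.add_sum_erase X _ hjX).symm
    have hbound : ∑ y ∈ X.erase j, r bstar (t j) y * β y ≤ (g:ℝ) * N^(g-j) := by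
      have hterm : ∀ y ∈ X.erase j, r bstar (t j) y * β y ≤ N^(g-j) := by
        intro y hy
        obtain ⟨hyne, hyX⟩ := Finset.mem_erase.mp hy
        obtain ⟨hy1, hyg⟩ := Finset.mem_Icc.mp (by rwa [hX] at hyX)
        rcases lt_or_gt_of_ne hyne with hlt | hgt
        · have h0 : r bstar (t j) y = 0 := by
            refine hr0s bstar (t j) y hyX ?_
            rw [htlt j y hlt]; linarith
          rw [h0, zero_mul]
          positivity
        · have h1 : r bstar (t j) y ≤ 1 := hrle1 bstar (t j) y hyX
          have h2 : β y ≤ N^(g-j) := by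
            have hexp : g + 1 - y ≤ g - j := by omega
            exact pow_le_pow_right₀ hN1 hexp
          calc r bstar (t j) y * β y ≤ 1 * N^(g-j) :=
                mul_le_mul h1 h2 (hβpos y).le (by norm_num)
          _ = N^(g-j) := one_mul _
      calc ∑ y ∈ X.erase j, r bstar (t j) y * β y
          ≤ (X.erase j).card • N^(g-j) := Finset.sum_le_card_nsmul _ _ _ hterm
      _ = ((X.erase j).card : ℝ) * N^(g-j) := nsmul_eq_mul _ _
      _ ≤ (g:ℝ) * N^(g-j) := by
          apply mul_le_mul_of_nonneg_right _ (pow_nonneg hN0.le _)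
          have hcard : (X.erase j).card ≤ g := by
            calc (X.erase j).card ≤ X.card := Finset.card_erase_le
            _ = g := by rw [hX, Nat.card_Icc]; omega
          exact_mod_cast hcard
    have hβj : β j = N^(g-j) * N := by
      have hexp : g + 1 - j = (g - j) + 1 := by omega
      simp only [hβ]
      rw [hexp, pow_succ]
    have hgN : (g:ℝ)/N * β j = (g:ℝ) * N^(g-j) := by
      rw [hβj]; field_simp
    have hkey : (r bstar (S j) j - (g:ℝ)/N) * β j ≤ r bstar (t j) j * β j := by
      have hexp : (r bstar (S j) j - (g:ℝ)/N) * β j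
          = r bstar (S j) j * β j - (g:ℝ) * N^(g-j) := by
        rw [sub_mul, hgN]
      rw [hexp]; linarith
    exact le_of_mul_le_mul_right hkey (hβpos j)
  -- main downward induction
  have hclaim : ∀ k : ℕ, ∀ j : ℕ, 1 ≤ j → j + k = g →
      ∀ x ∈ Finset.Icc j g,
        r bstar (S x) x - (2*(g:ℝ)+2)^(k+1)/N ≤ r bstar (t j) x := by
    intro k
    induction k with
    | zero =>
      intro j hj1 hjg x hx
      obtain ⟨hx1, hx2⟩ := Finset.mem_Icc.mp hx
      have hxj : x = j := by omega
      have hp1 := hpin j hj1 (by omega)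
      have hgle : (g:ℝ)/N ≤ (2*(g:ℝ)+2)^(0+1)/N := by
        have h1 : (g:ℝ) ≤ (2*(g:ℝ)+2)^(0+1) := by rw [pow_one]; linarith
        exact hdivN _ _ h1
      rw [hxj]
      linarith
    | succ k ih =>
      intro j hj1 hjg x hx
      obtain ⟨hx1, hx2⟩ := Finset.mem_Icc.mp hx
      have hjg' : j + 1 + k = g := by omega
      have ihj := ih (j+1) (by omega) hjg'
      set e' : ℝ := (2*(g:ℝ)+2)^(k+1)/N with he'
      have he'1N : 1/N ≤ e' := by
        have h1 : (1:ℝ) ≤ (2*(g:ℝ)+2)^(k+1) := one_le_pow₀ hbase1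
        exact hdivN _ _ h1
      have he'0 : 0 ≤ e' := le_trans (by positivity) he'1N
      have hpow : (2*(g:ℝ)+2)^(k+1+1)/N = (2*(g:ℝ)+2) * e' := by
        rw [he', pow_succ]; ring
      rcases eq_or_lt_of_le hx1 with hxj | hxj
      · -- x = j : pin case
        have hp1 := hpin j hj1 (by omega)
        have hgle : (g:ℝ)/N ≤ (2*(g:ℝ)+2)^(k+1+1)/N := by
          have h1 : (g:ℝ) ≤ (2*(g:ℝ)+2)^(k+1+1) := by
            have h2 : (2*(g:ℝ)+2)^1 ≤ (2*(g:ℝ)+2)^(k+1+1) :=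
              pow_le_pow_right₀ hbase1 (by omega)
            rw [pow_one] at h2; linarith
          exact hdivN _ _ h1
        rw [← hxj]
        linarith
      · -- j < x : deficit case
        set Y := Finset.Icc (j+1) g with hY
        have hxY : x ∈ Y := by rw [hY]; exact Finset.mem_Icc.mpr ⟨hxj, hx2⟩
        have hYsub : Y ⊆ X := by
          rw [hY, hX]; apply Finset.Icc_subset_Icc_left; omega
        have hYX : ∀ y ∈ Y, y ∈ X := fun y hy => hYsub hy
        -- seller DSIC between t j and t (j+1)
        have h1 := hDSICseller bstar (t j) (t (j+1))
        -- LHS = N * ∑_{y ∈ Y} r bstar (t (j+1)) y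
        have hvan : ∀ y ∈ X, y ∉ Y → r bstar (t (j+1)) y * (p y - t j y) = 0 := by
          intro y hyX hyY
          have hy1 : 1 ≤ y := (Finset.mem_Icc.mp (by rwa [hX] at hyX)).1
          have hyg : y ≤ g := (Finset.mem_Icc.mp (by rwa [hX] at hyX)).2
          have hylt : y < j + 1 := by
            by_contra hc2
            exact hyY (by rw [hY]; exact Finset.mem_Icc.mpr ⟨by omega, hyg⟩)
          have h0 : r bstar (t (j+1)) y = 0 := by
            refine hr0s bstar (t (j+1)) y hyX ?_
            rw [htlt (j+1) y hylt]; linarith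
          rw [h0, zero_mul]
        have hLHS : ∑ y ∈ X, r bstar (t (j+1)) y * (p y - t j y)
            = ∑ y ∈ Y, r bstar (t (j+1)) y * N := by
          rw [← Finset.sum_subset hYsub hvan]
          refine Finset.sum_congr rfl (fun y hy => ?_)
          have hyj : j < y := (Finset.mem_Icc.mp (by rwa [hY] at hy)).1
          rw [htgt j y hyj]
          ring_nf
        -- RHS ≤ 1 + N * T
        set T : ℝ := ∑ y ∈ Y, r bstar (t j) y with hT
        have hRHS : ∑ y ∈ X, r bstar (t j) y * (p y - t j y)
            ≤ 1 + N * T := by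
          have hJsub : Finset.Icc j g ⊆ X := by
            rw [hX]; apply Finset.Icc_subset_Icc_left; omega
          have hvan2 : ∀ y ∈ X, y ∉ Finset.Icc j g →
              r bstar (t j) y * (p y - t j y) = 0 := by
            intro y hyX hyJ
            have hy1 : 1 ≤ y := (Finset.mem_Icc.mp (by rwa [hX] at hyX)).1
            have hyg : y ≤ g := (Finset.mem_Icc.mp (by rwa [hX] at hyX)).2
            have hylt : y < j := by
              by_contra hc2
              exact hyJ (Finset.mem_Icc.mpr ⟨by omega, hyg⟩)
            have h0 : r bstar (t j) y = 0 := by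
              refine hr0s bstar (t j) y hyX ?_
              rw [htlt j y hylt]; linarith
            rw [h0, zero_mul]
          have hstep1 : ∑ y ∈ X, r bstar (t j) y * (p y - t j y)
              = ∑ y ∈ Finset.Icc j g, r bstar (t j) y * (p y - t j y) :=
            (Finset.sum_subset hJsub hvan2).symm
          have hjmem : j ∈ Finset.Icc j g := Finset.mem_Icc.mpr ⟨le_rfl, by omega⟩
          have hstep2 : ∑ y ∈ Finset.Icc j g, r bstar (t j) y * (p y - t j y)
              = r bstar (t j) j * (p j - t j j)
                + ∑ y ∈ Y, r bstar (t j) y * (p y - t j y) := by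
            rw [← Finset.add_sum_erase _ _ hjmem]
            congr 1
            rw [Finset.Icc_erase_left, hY, Finset.Icc_add_one_left_eq_Ioc]
          have hstep3 : ∑ y ∈ Y, r bstar (t j) y * (p y - t j y) = N * T := by
            rw [hT, Finset.mul_sum]
            refine Finset.sum_congr rfl (fun y hy => ?_)
            have hyj : j < y := (Finset.mem_Icc.mp (by rwa [hY] at hy)).1
            rw [htgt j y hyj]; ring
          have hjX2 : j ∈ X := by rw [hX]; exact Finset.mem_Icc.mpr ⟨hj1, by omega⟩
          have hterm : r bstar (t j) j * (p j - t j j) ≤ 1 := by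
            rw [hteq]
            have := hrle1 bstar (t j) j hjX2
            have := hnn bstar (t j) j
            nlinarith
          rw [hstep1, hstep2, hstep3]
          linarith
        -- lower bound for LHS via induction hypothesis
        have hLb : N * ∑ y ∈ Y, (r bstar (S y) y - e') ≤ ∑ y ∈ Y, r bstar (t (j+1)) y * N := by
          rw [Finset.mul_sum]
          refine Finset.sum_le_sum (fun y hy => ?_)
          have hyI : y ∈ Finset.Icc (j+1) g := by rwa [hY] at hy
          have := ihj y hyI
          nlinarith [hN0]
        -- T lower bound
        have hTlb : ∑ y ∈ Y, (r bstar (S y) y - e') - 1/N ≤ T := by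
          have hcomb : N * ∑ y ∈ Y, (r bstar (S y) y - e') ≤ 1 + N * T := by
            calc N * ∑ y ∈ Y, (r bstar (S y) y - e')
                ≤ ∑ y ∈ Y, r bstar (t (j+1)) y * N := hLb
            _ = ∑ y ∈ X, r bstar (t (j+1)) y * (p y - t j y) := hLHS.symm
            _ ≤ ∑ y ∈ X, r bstar (t j) y * (p y - t j y) := h1
            _ ≤ 1 + N * T := hRHS
          have h2 : ∑ y ∈ Y, (r bstar (S y) y - e') ≤ 1/N + T := by
            rw [← mul_le_mul_iff_right₀ hN0]
            calc N * ∑ y ∈ Y, (r bstar (S y) y - e') ≤ 1 + N * T := hcomb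
            _ = N * (1/N + T) := by field_simp
          linarith
        -- peel off x
        have hsplitY : ∑ y ∈ Y, (r bstar (S y) y - e')
            = (r bstar (S x) x - e') + ∑ y ∈ Y.erase x, (r bstar (S y) y - e') :=
          (Finset.add_sum_erase Y _ hxY).symm
        have hsplitT : T = r bstar (t j) x + ∑ y ∈ Y.erase x, r bstar (t j) y := by
          rw [hT, ← Finset.add_sum_erase Y _ hxY]
        -- cap each other term
        have hcapY : ∑ y ∈ Y.erase x, r bstar (t j) y
            ≤ ∑ y ∈ Y.erase x, (r bstar (S y) y + 1/N) := by
          refine Finset.sum_le_sum (fun y hy => ?_)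
          have hyX2 : y ∈ X := hYX y (Finset.mem_of_mem_erase hy)
          exact hcap y hyX2 (t j)
        -- cardinality bound
        have hcardY : ((Y.erase x).card : ℝ) ≤ (g:ℝ) - 1 := by
          have hc1 : (Y.erase x).card = Y.card - 1 :=
            Finset.card_erase_of_mem hxY
          have hc2 : Y.card = g - j := by rw [hY, Nat.card_Icc]; omega
          have hc3 : (Y.erase x).card ≤ g - 1 := by omega
          calc ((Y.erase x).card : ℝ) ≤ ((g - 1 : ℕ) : ℝ) := by exact_mod_cast hc3
          _ = (g:ℝ) - 1 := by
              have : (1:ℕ) ≤ g := hg1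
              push_cast [Nat.cast_sub this]
              ring
        -- combine everything
        have hsum_err : ∑ y ∈ Y.erase x, (r bstar (S y) y + 1/N)
            - ∑ y ∈ Y.erase x, (r bstar (S y) y - e')
            = ((Y.erase x).card : ℝ) * (1/N + e') := by
          rw [← Finset.sum_sub_distrib]
          have : ∀ y ∈ Y.erase x, (r bstar (S y) y + 1/N) - (r bstar (S y) y - e')
              = 1/N + e' := fun y _ => by ring
          rw [Finset.sum_congr rfl this, Finset.sum_const, nsmul_eq_mul]
        have hfinal : r bstar (S x) x - (2*(g:ℝ)+2)^(k+1+1)/N ≤ r bstar (t j) x := by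
          have herr : ((Y.erase x).card : ℝ) * (1/N + e') ≤ ((g:ℝ) - 1) * (2*e') := by
            apply mul_le_mul hcardY (by linarith) (by positivity) (by linarith)
          rw [hpow]
          have hA : r bstar (t j) x ≥ (r bstar (S x) x - e') - 1/N
              - ((Y.erase x).card : ℝ) * (1/N + e') := by
            have h5 : r bstar (t j) x = T - ∑ y ∈ Y.erase x, r bstar (t j) y := by
              rw [hsplitT]; ring
            rw [h5]
            have h6 := hTlb
            rw [hsplitY] at h6
            have h7 : ∑ y ∈ Y.erase x, r bstar (t j) y
                ≤ ∑ y ∈ Y.erase x, (r bstar (S y) y - e')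
                  + ((Y.erase x).card : ℝ) * (1/N + e') := by
              have := hcapY
              linarith [hsum_err]
            linarith
          have hid : (2*(g:ℝ)+2) * e' - (e' + 1/N + ((g:ℝ) - 1) * (2*e'))
              = 3*e' - 1/N := by ring
          have : (2*(g:ℝ)+2) * e' ≥ e' + 1/N + ((g:ℝ) - 1) * (2*e') := by
            linarith [he'1N, hid]
          linarith
        exact hfinal
  -- final contradiction
  have hfin : ∀ x ∈ X, α - M/N ≤ r bstar (t 1) x := by
    intro x hx
    have hg1' : 1 + (g - 1) = g := by omega
    have h := hclaim (g-1) 1 le_rfl hg1' x (by rwa [hX] at hx)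
    have hexp : g - 1 + 1 = g := by omega
    rw [hexp] at h
    have := hq_ge x hx
    rw [← hM] at h
    linarith
  have hmass := hsum bstar (t 1)
  have hlow : (g:ℝ) * (α - M/N) ≤ ∑ x ∈ X, r bstar (t 1) x := by
    have h := Finset.card_nsmul_le_sum X (fun x => r bstar (t 1) x) (α - M/N) hfin
    have hXcard : (X.card : ℝ) = g := by
      have h9 : g + 1 - 1 = g := by omega
      rw [hX, Nat.card_Icc, h9]
    calc (g:ℝ) * (α - M/N) = (X.card : ℝ) * (α - M/N) := by rw [hXcard]
    _ = X.card • (α - M/N) := (nsmul_eq_mul _ _).symm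
    _ ≤ ∑ x ∈ X, r bstar (t 1) x := h
  have hgt : (1:ℝ) < (g:ℝ) * (α - M/N) := by
    have h1 : 1/(g:ℝ) < α - M/N := by
      have : α - d = 1/(g:ℝ) := by rw [hdd]; ring
      linarith
    calc (1:ℝ) = (g:ℝ) * (1/(g:ℝ)) := by field_simp
    _ < (g:ℝ) * (α - M/N) := by
        exact mul_lt_mul_of_pos_left h1 hgR0
  linarith
end
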